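/- For m, n ≥ 3, every nonzero matrix in the span of {E_{i-1,j+1} - 2E_{i,j} + E_{i+1,j-1} : 1 ≤ i ≤ m-2, 1 ≤ j ≤ n-2} has rank at least 3. -/
import Mathlib
open Polynomial Matrix

/-! ### Auxiliary lemmas -/

lemma wronskian_dep {f g : ℂ[X]} (hf : f ≠ 0) (hg : g ≠ 0)
    (h : f * derivative g = derivative f * g) : ∃ c : ℂ, g = C c * f := by
  set d := EuclideanDomain.gcd f g with hd
  obtain ⟨f1, hf1⟩ : d ∣ f := EuclideanDomain.gcd_dvd_left f g
  obtain ⟨g1, hg1⟩ : d ∣ g := EuclideanDomain.gcd_dvd_right f g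
  have hd0 : d ≠ 0 := fun h0 => hf (by rw [hf1, h0, zero_mul])
  have hf10 : f1 ≠ 0 := fun h0 => hf (by rw [hf1, h0, mul_zero])
  have hg10 : g1 ≠ 0 := fun h0 => hg (by rw [hg1, h0, mul_zero])
  have hcop : IsCoprime f1 g1 := by
    have hb := EuclideanDomain.gcd_eq_gcd_ab f g
    refine ⟨EuclideanDomain.gcdA f g, EuclideanDomain.gcdB f g, ?_⟩
    have : d * 1 = d * (EuclideanDomain.gcdA f g * f1 + EuclideanDomain.gcdB f g * g1) := by
      rw [mul_one]
      calc d = f * EuclideanDomain.gcdA f g + g * EuclideanDomain.gcdB f g := hb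
      _ = _ := by rw [hf1, hg1]; ring
    exact (mul_left_cancel₀ hd0 this).symm
  have key : f1 * derivative g1 = derivative f1 * g1 := by
    have expand : d * d * (f1 * derivative g1) = d * d * (derivative f1 * g1) := by
      have := h
      rw [hf1, hg1, derivative_mul, derivative_mul] at this
      ring_nf at this ⊢
      linear_combination this
    exact mul_left_cancel₀ (mul_ne_zero hd0 hd0) expand
  have hdvd : f1 ∣ derivative f1 := by
    have : f1 ∣ derivative f1 * g1 := ⟨derivative g1, key.symm⟩
    exact hcop.dvd_of_dvd_mul_right this
  have hf1' : derivative f1 = 0 := by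
    by_contra h0
    have := Polynomial.natDegree_le_of_dvd hdvd h0
    have hnd : f1.natDegree ≠ 0 := by
      intro hz
      exact h0 (by rw [Polynomial.eq_C_of_natDegree_eq_zero hz]; simp)
    have h2 := Polynomial.natDegree_derivative_lt hnd
    omega
  have hg1' : derivative g1 = 0 := by
    have : f1 * derivative g1 = 0 := by rw [key, hf1', zero_mul]
    exact (mul_eq_zero.mp this).resolve_left hf10
  obtain ⟨a, ha⟩ : ∃ a, f1 = C a := ⟨_, Polynomial.eq_C_of_derivative_eq_zero hf1'⟩
  obtain ⟨b, hb⟩ : ∃ b, g1 = C b := ⟨_, Polynomial.eq_C_of_derivative_eq_zero hg1'⟩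
  have ha0 : a ≠ 0 := fun h0 => hf10 (by rw [ha, h0, map_zero])
  refine ⟨b / a, ?_⟩
  have hba : b / a * a = b := div_mul_cancel₀ b ha0
  rw [hg1, hb, hf1, ha,
    show C (b / a) * (d * C a) = d * C (b / a * a) from by rw [Polynomial.C_mul]; ring, hba]

noncomputable def pol {N : ℕ} (u : Fin N → ℂ) : ℂ[X] :=
  ∑ a : Fin N, monomial (a : ℕ) (u a)

lemma pol_coeff {N : ℕ} (u : Fin N → ℂ) (a : Fin N) : (pol u).coeff (a : ℕ) = u a := by
  rw [pol, Polynomial.finset_sum_coeff]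
  rw [Finset.sum_eq_single a]
  · simp
  · intro b _ hb
    rw [Polynomial.coeff_monomial, if_neg (fun h => hb (Fin.ext h))]
  · simp

lemma pol_eq_zero {N : ℕ} {u : Fin N → ℂ} (h : pol u = 0) : u = 0 := by
  funext a
  have := pol_coeff u a
  rw [h] at this
  simpa using this.symm

noncomputable def polw {N : ℕ} (u : Fin N → ℂ) : ℂ[X] :=
  ∑ a : Fin N, monomial (a : ℕ) (((a : ℕ) : ℂ) * u a)

lemma polw_eq {N : ℕ} (u : Fin N → ℂ) : polw u = X * derivative (pol u) := by
  rw [pol, polw, map_sum, Finset.mul_sum]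
  refine Finset.sum_congr rfl fun a _ => ?_
  rw [Polynomial.derivative_monomial]
  rcases Nat.eq_zero_or_pos (a : ℕ) with h | h
  · simp [h]
  · rw [Polynomial.X_mul_monomial, Nat.sub_add_cancel h, mul_comm]

lemma pol_mul_coeff {N P : ℕ} (u : Fin N → ℂ) (v : Fin P → ℂ) (s : ℕ) :
    (pol u * pol v).coeff s
      = ∑ a : Fin N, ∑ b : Fin P,
          (if (a : ℕ) + (b : ℕ) = s then (1:ℂ) else 0) * (u a * v b) := by
  rw [pol, pol, Finset.sum_mul_sum]
  rw [Polynomial.finset_sum_coeff]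
  refine Finset.sum_congr rfl fun a _ => ?_
  rw [Polynomial.finset_sum_coeff]
  refine Finset.sum_congr rfl fun b _ => ?_
  rw [Polynomial.monomial_mul_monomial, Polynomial.coeff_monomial]
  split <;> simp

lemma polw_mul_coeff {N P : ℕ} (u : Fin N → ℂ) (v : Fin P → ℂ) (s : ℕ) :
    (polw u * pol v).coeff s
      = ∑ a : Fin N, ∑ b : Fin P,
          (if (a : ℕ) + (b : ℕ) = s then (1:ℂ) else 0) * (((a:ℕ):ℂ) * (u a * v b)) := by
  rw [polw, pol, Finset.sum_mul_sum]
  rw [Polynomial.finset_sum_coeff]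
  refine Finset.sum_congr rfl fun a _ => ?_
  rw [Polynomial.finset_sum_coeff]
  refine Finset.sum_congr rfl fun b _ => ?_
  rw [Polynomial.monomial_mul_monomial, Polynomial.coeff_monomial]
  split
  · simp; ring
  · simp

lemma rank_le_two_decomp {m n : ℕ} (M : Matrix (Fin m) (Fin n) ℂ) (h : M.rank ≤ 2) :
    ∃ (u0 u1 : Fin m → ℂ) (v0 v1 : Fin n → ℂ),
      ∀ a b, M a b = u0 a * v0 b + u1 a * v1 b := by
  classical
  set W : Submodule ℂ (Fin m → ℂ) := Submodule.span ℂ (Set.range Mᵀ) with hW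
  have hrank : M.rank = Module.finrank ℂ W := M.rank_eq_finrank_span_cols
  have hfin : Module.finrank ℂ W ≤ 2 := hrank ▸ h
  have : FiniteDimensional ℂ W := inferInstance
  let b := Module.finBasis ℂ W
  set d := Module.finrank ℂ W with hd
  let c : Fin 2 → (Fin m → ℂ) := fun k => if hk : (k : ℕ) < d then (b ⟨k, hk⟩ : Fin m → ℂ) else 0
  have hcb : ∀ i : Fin d, (b i : Fin m → ℂ) = c ⟨(i : ℕ), lt_of_lt_of_le i.2 hfin⟩ := by
    intro i
    simp only [c, dif_pos i.2]
  have hmem : ∀ x : W, (x : Fin m → ℂ) ∈ Submodule.span ℂ {c 0, c 1} := by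
    intro x
    have hx := b.sum_repr x
    have hx' : (x : Fin m → ℂ) = ∑ i, b.repr x i • ((b i : W) : Fin m → ℂ) := by
      conv_lhs => rw [← hx]
      push_cast
      rfl
    rw [hx']
    refine Submodule.sum_mem _ fun i _ => Submodule.smul_mem _ _ ?_
    rw [hcb i]
    apply Submodule.subset_span
    have hall : ∀ k : Fin 2, c k ∈ ({c 0, c 1} : Set (Fin m → ℂ)) := by
      intro k
      fin_cases k
      · exact Set.mem_insert _ _
      · exact Set.mem_insert_of_mem _ rfl
    exact hall _
  have hcol : ∀ j : Fin n, ∃ x y : ℂ, x • c 0 + y • c 1 = fun a => M a j := by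
    intro j
    have : (Mᵀ j : Fin m → ℂ) ∈ W := Submodule.subset_span ⟨j, rfl⟩
    have := hmem ⟨_, this⟩
    rw [Submodule.mem_span_pair] at this
    obtain ⟨x, y, hxy⟩ := this
    exact ⟨x, y, by rw [hxy]; rfl⟩
  choose x y hxy using hcol
  refine ⟨c 0, c 1, x, y, fun a j => ?_⟩
  have := congrFun (hxy j) a
  simp only [Pi.add_apply, Pi.smul_apply, smul_eq_mul] at this
  rw [← this]; ring

/-- Sum of an indicator-supported single entry. -/
lemma single_sum {m n : ℕ} (p q s : ℕ) (hp : p < m) (hq : q < n) (w : ℕ → ℂ) (cst : ℂ) :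
    ∑ a : Fin m, ∑ b : Fin n,
        (if (a:ℕ)+(b:ℕ) = s then (1:ℂ) else 0)
          * (w (a:ℕ) * (if (a:ℕ) = p ∧ (b:ℕ) = q then cst else 0))
      = if p + q = s then w p * cst else 0 := by
  rw [Finset.sum_eq_single (⟨p, hp⟩ : Fin m)]
  · rw [Finset.sum_eq_single (⟨q, hq⟩ : Fin n)]
    · have hc : (((⟨p, hp⟩ : Fin m) : ℕ) = p ∧ ((⟨q, hq⟩ : Fin n) : ℕ) = q) := ⟨rfl, rfl⟩
      rw [if_pos hc]
      simp only [Fin.val_mk]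
      split <;> ring
    · intro b _ hb
      have hz : (if ((⟨p, hp⟩ : Fin m) : ℕ) = p ∧ (b : ℕ) = q then cst else 0) = 0 :=
        if_neg (fun h => hb (Fin.ext h.2))
      rw [hz, mul_zero, mul_zero]
    · intro h; exact absurd (Finset.mem_univ _) h
  · intro a _ ha
    apply Finset.sum_eq_zero
    intro b _
    have hz : (if ((a : ℕ) = p ∧ (b : ℕ) = q) then cst else 0) = 0 :=
      if_neg (fun h => ha (Fin.ext h.1))
    rw [hz, mul_zero, mul_zero]
  · intro h; exact absurd (Finset.mem_univ _) h

/-- The matrix `E_{i-1,j+1} - 2 E_{i,j} + E_{i+1,j-1}` built from standard matrix units,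
for natural number indices `1 ≤ i ≤ m-2`, `1 ≤ j ≤ n-2`. -/
def genE (m n : ℕ) (i j : ℕ) : Matrix (Fin m) (Fin n) ℂ :=
  Matrix.of fun a b =>
    (if (a : ℕ) = i - 1 ∧ (b : ℕ) = j + 1 then 1 else 0)
    - 2 * (if (a : ℕ) = i ∧ (b : ℕ) = j then 1 else 0)
    + (if (a : ℕ) = i + 1 ∧ (b : ℕ) = j - 1 then 1 else 0)

lemma genE_sum {m n : ℕ} (hm : 3 ≤ m) (hn : 3 ≤ n) {i j : ℕ}
    (hi1 : 1 ≤ i) (hi2 : i ≤ m - 2) (hj1 : 1 ≤ j) (hj2 : j ≤ n - 2) (w : ℕ → ℂ) (s : ℕ) :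
    ∑ a : Fin m, ∑ b : Fin n,
        (if (a:ℕ)+(b:ℕ) = s then (1:ℂ) else 0) * (w (a:ℕ) * genE m n i j a b)
      = if i + j = s then w (i-1) - 2 * w i + w (i+1) else 0 := by
  have h1 : i - 1 < m := by omega
  have h2 : i < m := by omega
  have h3 : i + 1 < m := by omega
  have h4 : j + 1 < n := by omega
  have h5 : j < n := by omega
  have h6 : j - 1 < n := by omega
  have step : ∀ (a : Fin m) (b : Fin n),
      (if (a:ℕ)+(b:ℕ) = s then (1:ℂ) else 0) * (w (a:ℕ) * genE m n i j a b)
      = (if (a:ℕ)+(b:ℕ) = s then (1:ℂ) else 0)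
          * (w (a:ℕ) * (if (a:ℕ) = i - 1 ∧ (b:ℕ) = j + 1 then (1:ℂ) else 0))
        - 2 * ((if (a:ℕ)+(b:ℕ) = s then (1:ℂ) else 0)
          * (w (a:ℕ) * (if (a:ℕ) = i ∧ (b:ℕ) = j then (1:ℂ) else 0)))
        + (if (a:ℕ)+(b:ℕ) = s then (1:ℂ) else 0)
          * (w (a:ℕ) * (if (a:ℕ) = i + 1 ∧ (b:ℕ) = j - 1 then (1:ℂ) else 0)) := by
    intro a b
    simp only [genE, Matrix.of_apply]
    ring
  simp only [step]
  simp only [Finset.sum_add_distrib, Finset.sum_sub_distrib, ← Finset.mul_sum]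
  rw [single_sum (i-1) (j+1) s h1 h4 w 1, single_sum i j s h2 h5 w 1,
    single_sum (i+1) (j-1) s h3 h6 w 1]
  rw [if_congr (show (i-1) + (j+1) = s ↔ i + j = s by omega) rfl rfl,
    if_congr (show (i+1) + (j-1) = s ↔ i + j = s by omega) rfl rfl]
  split <;> ring

theorem stmt_12 (m n : ℕ) (hm : 3 ≤ m) (hn : 3 ≤ n)
    (M : Matrix (Fin m) (Fin n) ℂ)
    (hM : M ∈ Submodule.span ℂ
      {M : Matrix (Fin m) (Fin n) ℂ |
        ∃ i j : ℕ, 1 ≤ i ∧ i ≤ m - 2 ∧ 1 ≤ j ∧ j ≤ n - 2 ∧ M = genE m n i j})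
    (hM0 : M ≠ 0) :
    3 ≤ M.rank := by
  -- Step 1: the two moment conditions on every anti-diagonal
  have hcond : ∀ s : ℕ,
      (∑ a : Fin m, ∑ b : Fin n,
        (if (a:ℕ)+(b:ℕ) = s then (1:ℂ) else 0) * ((1:ℂ) * M a b)) = 0 ∧
      (∑ a : Fin m, ∑ b : Fin n,
        (if (a:ℕ)+(b:ℕ) = s then (1:ℂ) else 0) * (((a:ℕ):ℂ) * M a b)) = 0 := by
    clear hM0
    induction hM using Submodule.span_induction with
    | mem x hx =>
      obtain ⟨i, j, hi1, hi2, hj1, hj2, rfl⟩ := hx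
      intro s
      constructor
      · rw [genE_sum hm hn hi1 hi2 hj1 hj2 (fun _ => (1:ℂ)) s]
        split <;> ring
      · rw [genE_sum hm hn hi1 hi2 hj1 hj2 (fun k => ((k:ℕ):ℂ)) s]
        split
        · push_cast [Nat.cast_sub hi1]; ring
        · rfl
    | zero => intro s; simp
    | add x y _ _ hx hy =>
      intro s
      have h1 := hx s
      have h2 := hy s
      have e1 : (∑ a : Fin m, ∑ b : Fin n,
          (if (a:ℕ)+(b:ℕ) = s then (1:ℂ) else 0) * ((1:ℂ) * (x + y) a b))
          = (∑ a : Fin m, ∑ b : Fin n,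
            (if (a:ℕ)+(b:ℕ) = s then (1:ℂ) else 0) * ((1:ℂ) * x a b))
          + (∑ a : Fin m, ∑ b : Fin n,
            (if (a:ℕ)+(b:ℕ) = s then (1:ℂ) else 0) * ((1:ℂ) * y a b)) := by
        rw [← Finset.sum_add_distrib]
        refine Finset.sum_congr rfl fun a _ => ?_
        rw [← Finset.sum_add_distrib]
        refine Finset.sum_congr rfl fun b _ => ?_
        simp only [Matrix.add_apply]; ring
      have e2 : (∑ a : Fin m, ∑ b : Fin n,
          (if (a:ℕ)+(b:ℕ) = s then (1:ℂ) else 0) * (((a:ℕ):ℂ) * (x + y) a b))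
          = (∑ a : Fin m, ∑ b : Fin n,
            (if (a:ℕ)+(b:ℕ) = s then (1:ℂ) else 0) * (((a:ℕ):ℂ) * x a b))
          + (∑ a : Fin m, ∑ b : Fin n,
            (if (a:ℕ)+(b:ℕ) = s then (1:ℂ) else 0) * (((a:ℕ):ℂ) * y a b)) := by
        rw [← Finset.sum_add_distrib]
        refine Finset.sum_congr rfl fun a _ => ?_
        rw [← Finset.sum_add_distrib]
        refine Finset.sum_congr rfl fun b _ => ?_
        simp only [Matrix.add_apply]; ring
      exact ⟨by rw [e1, h1.1, h2.1, add_zero], by rw [e2, h1.2, h2.2, add_zero]⟩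
    | smul r x _ hx =>
      intro s
      have h1 := hx s
      have e1 : (∑ a : Fin m, ∑ b : Fin n,
          (if (a:ℕ)+(b:ℕ) = s then (1:ℂ) else 0) * ((1:ℂ) * (r • x) a b))
          = r * (∑ a : Fin m, ∑ b : Fin n,
            (if (a:ℕ)+(b:ℕ) = s then (1:ℂ) else 0) * ((1:ℂ) * x a b)) := by
        rw [Finset.mul_sum]
        refine Finset.sum_congr rfl fun a _ => ?_
        rw [Finset.mul_sum]
        refine Finset.sum_congr rfl fun b _ => ?_
        simp only [Matrix.smul_apply, smul_eq_mul]; ring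
      have e2 : (∑ a : Fin m, ∑ b : Fin n,
          (if (a:ℕ)+(b:ℕ) = s then (1:ℂ) else 0) * (((a:ℕ):ℂ) * (r • x) a b))
          = r * (∑ a : Fin m, ∑ b : Fin n,
            (if (a:ℕ)+(b:ℕ) = s then (1:ℂ) else 0) * (((a:ℕ):ℂ) * x a b)) := by
        rw [Finset.mul_sum]
        refine Finset.sum_congr rfl fun a _ => ?_
        rw [Finset.mul_sum]
        refine Finset.sum_congr rfl fun b _ => ?_
        simp only [Matrix.smul_apply, smul_eq_mul]; ring
      exact ⟨by rw [e1, h1.1, mul_zero], by rw [e2, h1.2, mul_zero]⟩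
  -- Step 2: suppose rank ≤ 2 and decompose
  by_contra hlt
  push_neg at hlt
  obtain ⟨u0, u1, v0, v1, hdec⟩ := rank_le_two_decomp M (by omega)
  -- Step 3: polynomial identities
  set f0 := pol u0 with hf0d
  set f1 := pol u1 with hf1d
  set g0 := pol v0 with hg0d
  set g1 := pol v1 with hg1d
  have E1 : f0 * g0 + f1 * g1 = 0 := by
    ext s
    have key : (f0 * g0).coeff s + (f1 * g1).coeff s
        = ∑ a : Fin m, ∑ b : Fin n,
            (if (a:ℕ)+(b:ℕ) = s then (1:ℂ) else 0) * ((1:ℂ) * M a b) := by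
      rw [pol_mul_coeff, pol_mul_coeff, ← Finset.sum_add_distrib]
      refine Finset.sum_congr rfl fun a _ => ?_
      rw [← Finset.sum_add_distrib]
      refine Finset.sum_congr rfl fun b _ => ?_
      rw [hdec a b]; ring
    rw [Polynomial.coeff_add, Polynomial.coeff_zero, key, (hcond s).1]
  have E2w : polw u0 * g0 + polw u1 * g1 = 0 := by
    ext s
    have key : (polw u0 * g0).coeff s + (polw u1 * g1).coeff s
        = ∑ a : Fin m, ∑ b : Fin n,
            (if (a:ℕ)+(b:ℕ) = s then (1:ℂ) else 0) * (((a:ℕ):ℂ) * M a b) := by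
      rw [polw_mul_coeff, polw_mul_coeff, ← Finset.sum_add_distrib]
      refine Finset.sum_congr rfl fun a _ => ?_
      rw [← Finset.sum_add_distrib]
      refine Finset.sum_congr rfl fun b _ => ?_
      rw [hdec a b]; ring
    rw [Polynomial.coeff_add, Polynomial.coeff_zero, key, (hcond s).2]
  have E2 : derivative f0 * g0 + derivative f1 * g1 = 0 := by
    have : X * (derivative f0 * g0 + derivative f1 * g1) = X * 0 := by
      rw [mul_zero, ← E2w, polw_eq, polw_eq]; ring
    exact mul_left_cancel₀ Polynomial.X_ne_zero this
  -- helper to derive M = 0 from a rank-one situation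
  have rank1 : ∀ (u : Fin m → ℂ) (v : Fin n → ℂ),
      (∀ a b, M a b = u a * v b) → pol u * pol v = 0 → False := by
    intro u v hd hz
    rcases mul_eq_zero.mp hz with h | h
    · apply hM0
      ext a b
      rw [hd a b, congrFun (pol_eq_zero h) a]
      simp
    · apply hM0
      ext a b
      rw [hd a b, congrFun (pol_eq_zero h) b]
      simp
  -- Step 4: case analysis
  by_cases hg0 : g0 = 0
  · have hv0 : v0 = 0 := pol_eq_zero hg0
    refine rank1 u1 v1 (fun a b => ?_) ?_
    · rw [hdec a b, congrFun hv0 b, Pi.zero_apply]; ring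
    · have := E1; rw [hg0, mul_zero, zero_add] at this; exact this
  by_cases hg1 : g1 = 0
  · have hv1 : v1 = 0 := pol_eq_zero hg1
    refine rank1 u0 v0 (fun a b => ?_) ?_
    · rw [hdec a b, congrFun hv1 b, Pi.zero_apply]; ring
    · have := E1; rw [hg1, mul_zero, add_zero] at this; exact this
  by_cases hf0 : f0 = 0
  · have hu0 : u0 = 0 := pol_eq_zero hf0
    refine rank1 u1 v1 (fun a b => ?_) ?_
    · rw [hdec a b, congrFun hu0 a, Pi.zero_apply]; ring
    · have := E1; rw [hf0, zero_mul, zero_add] at this; exact this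
  by_cases hf1 : f1 = 0
  · have hu1 : u1 = 0 := pol_eq_zero hf1
    refine rank1 u0 v0 (fun a b => ?_) ?_
    · rw [hdec a b, congrFun hu1 a, Pi.zero_apply]; ring
    · have := E1; rw [hf1, zero_mul, add_zero] at this; exact this
  -- all four nonzero: Wronskian argument
  have hw : (f1 * derivative f0 - derivative f1 * f0) * g0 = 0 := by
    linear_combination f1 * E2 - derivative f1 * E1
  have hw0 : f1 * derivative f0 = derivative f1 * f0 := by
    rcases mul_eq_zero.mp hw with h | h
    · exact sub_eq_zero.mp h
    · exact absurd h hg0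
  obtain ⟨c, hc⟩ := wronskian_dep hf1 hf0 hw0
  have hg : f1 * (C c * g0 + g1) = 0 := by
    have : (C c * f1) * g0 + f1 * g1 = 0 := by rw [← hc]; exact E1
    linear_combination this
  have hgeq : g1 = -(C c * g0) := by
    rcases mul_eq_zero.mp hg with h | h
    · exact absurd h hf1
    · exact eq_neg_of_add_eq_zero_right h
  apply hM0
  ext a b
  have hu : u0 a = c * u1 a := by
    have := congrArg (fun p => Polynomial.coeff p (a : ℕ)) hc
    simpa [hf0d, hf1d, pol_coeff, Polynomial.coeff_C_mul] using this
  have hv : v1 b = -(c * v0 b) := by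
    have := congrArg (fun p => Polynomial.coeff p (b : ℕ)) hgeq
    simpa [hg0d, hg1d, pol_coeff, Polynomial.coeff_C_mul] using this
  rw [hdec a b, hu, hv]
  simp
  ring
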